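/- Let 0 ≤ y_1 < x_1 < y_2 ≤ n, set a = y_1 + y_2 − x_1 and M = [1,y_1] ∪ (x_1,y_2] ⊆ {1,…,n}, and consider the rung map L = R^{NE}_{x_1−y_1} : V_{x_1} ⊗ V_a → V_{y_1} ⊗ V_{y_2}. Then for every A ⊆ {1,…,n} with |A| = a: (i) if |A ∩ [1,x_1]| > y_1 then L(x_{[1,x_1]} ⊗ x_A) = 0; (ii) L(x_{[1,x_1]} ⊗ x_M) = ε q^z · x_{[1,y_1]} ⊗ x_{[1,y_2]} for some sign ε ∈ {±1} and z ∈ ℤ; (iii) if A ≠ M then the coefficient of x_{[1,y_1]} ⊗ x_{[1,y_2]} in L(x_{[1,x_1]} ⊗ x_A) is zero. -/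
import Mathlib


noncomputable section

/-- The base ring `R = ℤ[q,q⁻¹]`. -/
abbrev R := LaurentPolynomial ℤ

/-- Index type for the basis of the "big" free module `⊕_p V_p`: all subsets of `{1,…,n}`. -/
abbrev F (n : ℕ) := Finset (Fin n)

/-- The free `R`-module `⊕_p V_p` with basis `x_S` for `S ⊆ {1,…,n}`; the submodule spanned
by the `x_S` with `|S| = p` is `V_p`. -/
abbrev Big (n : ℕ) := F n →₀ R

/-- The model of `(⊕ V_p) ⊗ (⊕ V_r)`, free on pairs of subsets. -/
abbrev Big2 (n : ℕ) := (F n × F n) →₀ R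

/-- The model of a `d`-fold tensor product, free on `d`-tuples of subsets. -/
abbrev BigD (n d : ℕ) := (Fin d → F n) →₀ R

/-- `ℓ(S,T) = #{(i,j) ∈ S × T : i < j}`. -/
def ell {n : ℕ} (S T : F n) : ℕ := ((S ×ˢ T).filter (fun p => p.1 < p.2)).card

/-- `(−q)^z` for `z : ℤ`. -/
def negqpow (z : ℤ) : R := (-1 : R) ^ z.natAbs * LaurentPolynomial.T z

/-- The merge map `M` : `x_S ⊗ x_T ↦ (−q)^{ℓ(S,T)} x_{S ∪ T}` if `S ∩ T = ∅`, else `0`.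
On the graded piece `V_a ⊗ V_b` this is `M_{a,b}`. -/
def mergeMap (n : ℕ) : Big2 n →ₗ[R] Big n :=
  Finsupp.lift (Big n) R (F n × F n)
    (fun p => if Disjoint p.1 p.2
      then Finsupp.single (p.1 ∪ p.2) (negqpow (ell p.1 p.2)) else 0)

/-- The split map taking the second tensor factor of size `c`:
`x_S ↦ (−1)^{(|S|−c)·c} Σ_{T ⊆ S, |T| = |S|−c} (−q)^{−ℓ(S∖T,T)} x_T ⊗ x_{S∖T}`.
On the graded piece `V_{a+c}` this is `M'_{a,c}`. -/
def splitR (n c : ℕ) : Big n →ₗ[R] Big2 n :=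
  Finsupp.lift (Big2 n) R (F n)
    (fun S => ((-1 : R) ^ ((S.card - c) * c)) •
      ∑ T ∈ S.powersetCard (S.card - c),
        Finsupp.single (T, S \ T) (negqpow (-(ell (S \ T) T : ℤ))))

/-- The split map taking the first tensor factor of size `c`:
`x_S ↦ (−1)^{c·(|S|−c)} Σ_{T ⊆ S, |T| = c} (−q)^{−ℓ(S∖T,T)} x_T ⊗ x_{S∖T}`.
On the graded piece `V_{c+b}` this is `M'_{c,b}`. -/
def splitL (n c : ℕ) : Big n →ₗ[R] Big2 n :=
  Finsupp.lift (Big2 n) R (F n)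
    (fun S => ((-1 : R) ^ (c * (S.card - c))) •
      ∑ T ∈ S.powersetCard c,
        Finsupp.single (T, S \ T) (negqpow (-(ell (S \ T) T : ℤ))))

/-- `f ⊗ id` in the free-module model. -/
def tensorId {α α' β : Type} (f : (α →₀ R) →ₗ[R] (α' →₀ R)) :
    ((α × β) →₀ R) →ₗ[R] ((α' × β) →₀ R) :=
  Finsupp.lift _ R _
    (fun p => Finsupp.mapDomain (fun a => (a, p.2)) (f (Finsupp.single p.1 1)))

/-- `id ⊗ f` in the free-module model. -/
def idTensor {α β β' : Type} (f : (β →₀ R) →ₗ[R] (β' →₀ R)) :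
    ((α × β) →₀ R) →ₗ[R] ((α × β') →₀ R) :=
  Finsupp.lift _ R _
    (fun p => Finsupp.mapDomain (fun b => (p.1, b)) (f (Finsupp.single p.2 1)))

/-- The canonical associator of the free-module model. -/
def assocMap (α β γ : Type) : (((α × β) × γ) →₀ R) ≃ₗ[R] ((α × (β × γ)) →₀ R) :=
  Finsupp.domLCongr (Equiv.prodAssoc α β γ)

/-- The northeast rung map `R^{NE}_c = (id ⊗ M_{c,r}) ∘ (M'_{p−c,c} ⊗ id) :
V_p ⊗ V_r → V_{p−c} ⊗ V_{r+c}` (assembled over all graded pieces). -/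
def rungNE (n c : ℕ) : Big2 n →ₗ[R] Big2 n :=
  (idTensor (mergeMap n)) ∘ₗ (assocMap (F n) (F n) (F n)).toLinearMap
    ∘ₗ (tensorId (splitR n c))

/-- The northwest rung map `R^{NW}_c = (M_{p,c} ⊗ id) ∘ (id ⊗ M'_{c,r−c}) :
V_p ⊗ V_r → V_{p+c} ⊗ V_{r−c}` (assembled over all graded pieces). -/
def rungNW (n c : ℕ) : Big2 n →ₗ[R] Big2 n :=
  (tensorId (mergeMap n)) ∘ₗ (assocMap (F n) (F n) (F n)).symm.toLinearMap
    ∘ₗ (idTensor (splitL n c))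

/-- Apply a two-factor map `g` at the adjacent tensor positions `i, i+1` of a `d`-fold
tensor product: `id^{⊗i} ⊗ g ⊗ id^{⊗(d−i−2)}` (the identity if `i+1 ≥ d`). -/
def atPos (n d i : ℕ) (g : Big2 n →ₗ[R] Big2 n) : BigD n d →ₗ[R] BigD n d :=
  if h : i + 1 < d then
    Finsupp.lift (BigD n d) R (Fin d → F n)
      (fun f => Finsupp.mapDomain
        (fun p => Function.update (Function.update f ⟨i, Nat.lt_of_succ_lt h⟩ p.1) ⟨i + 1, h⟩ p.2)
        (g (Finsupp.single (f ⟨i, Nat.lt_of_succ_lt h⟩, f ⟨i + 1, h⟩) 1)))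
  else LinearMap.id

/-- The subset of `Fin n` corresponding (0-based) to the 1-based interval
`(a, b] ⊆ {1,…,n}` (so `[1,m]` is `ico n 0 m`). -/
def ico (n a b : ℕ) : F n :=
  Finset.univ.filter (fun j => a ≤ (j : ℕ) ∧ (j : ℕ) < b)

end
noncomputable section

lemma lift_single1 {M : Type} [AddCommMonoid M] [Module R M] {X : Type} (f : X → M) (x : X) :
    Finsupp.lift M R X f (Finsupp.single x (1:R)) = f x := by
  simp [Finsupp.lift_apply, Finsupp.sum_single_index]

lemma lift_single {M : Type} [AddCommMonoid M] [Module R M] {X : Type} (f : X → M) (x : X) (r : R) :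
    Finsupp.lift M R X f (Finsupp.single x r) = r • f x := by
  simp [Finsupp.lift_apply, Finsupp.sum_single_index]

lemma rungNE_single (n c : ℕ) (P A : F n) :
    rungNE n c (Finsupp.single (P, A) (1:R)) =
      ((-1 : R) ^ ((P.card - c) * c)) •
        ∑ T ∈ P.powersetCard (P.card - c),
          (if Disjoint (P \ T) A then
            Finsupp.single (T, (P \ T) ∪ A)
              (negqpow (-(ell (P \ T) T : ℤ)) * negqpow (ell (P \ T) A)) else 0) := by
  rw [rungNE]
  simp only [LinearMap.comp_apply]
  rw [tensorId, lift_single1, splitR, lift_single1]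
  rw [Finsupp.mapDomain_smul, map_smul, map_smul]
  congr 1
  rw [← Finsupp.mapDomain.addMonoidHom_apply, map_sum, map_sum, map_sum]
  refine Finset.sum_congr rfl (fun T hT => ?_)
  rw [Finsupp.mapDomain.addMonoidHom_apply, Finsupp.mapDomain_single]
  rw [assocMap]
  simp only [Finsupp.domLCongr_apply, LinearEquiv.coe_coe]
  rw [Finsupp.domCongr_apply, Finsupp.equivMapDomain_single]
  rw [idTensor, lift_single]
  rw [mergeMap, lift_single1]
  simp only [Equiv.prodAssoc_apply]
  split_ifs with h
  · rw [Finsupp.mapDomain_single, Finsupp.smul_single, smul_eq_mul]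
  · simp

lemma mem_ico {n : ℕ} (a b : ℕ) (j : Fin n) : j ∈ ico n a b ↔ a ≤ (j:ℕ) ∧ (j:ℕ) < b := by
  simp [ico]

lemma ico_card (n a b : ℕ) (hb : b ≤ n) : (ico n a b).card = b - a := by
  rw [← Nat.card_Ico a b]
  apply Finset.card_bij (fun (j : Fin n) _ => (j : ℕ))
  · intro j hj; rw [mem_ico] at hj; rw [Finset.mem_Ico]; omega
  · intro j _ j' _ h; exact Fin.val_injective h
  · intro m hm
    rw [Finset.mem_Ico] at hm
    exact ⟨⟨m, by omega⟩, by rw [mem_ico]; constructor <;> simp <;> omega, rfl⟩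

lemma signpow (k : ℕ) : ((-1 : R)) ^ k = LaurentPolynomial.C ((-1 : ℤ) ^ k) := by
  rw [map_pow, map_neg, map_one]

lemma negqpow_mul (l1 l2 : ℕ) :
    negqpow (-(l1 : ℤ)) * negqpow (l2 : ℤ) =
      LaurentPolynomial.C ((-1 : ℤ) ^ (l1 + l2)) * LaurentPolynomial.T ((l2 : ℤ) - l1) := by
  unfold negqpow
  rw [Int.natAbs_neg, Int.natAbs_natCast, Int.natAbs_natCast]
  have h : ((-1 : R)) ^ l1 * LaurentPolynomial.T (-(l1:ℤ)) * ((-1 : R) ^ l2 * LaurentPolynomial.T (l2:ℤ))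
      = ((-1:R)^(l1+l2)) * (LaurentPolynomial.T (-(l1:ℤ)) * LaurentPolynomial.T (l2:ℤ)) := by
    rw [pow_add]; ring
  rw [h, ← LaurentPolynomial.T_add, signpow]
  congr 2
  omega

/-- Properties of the rung map `L = R^{NE}_{x₁−y₁} : V_{x₁} ⊗ V_a → V_{y₁} ⊗ V_{y₂}`
(for `0 ≤ y₁ < x₁ < y₂ ≤ n`, `a = y₁ + y₂ − x₁`, `M = [1,y₁] ∪ (x₁,y₂]`):
(i) if `|A ∩ [1,x₁]| > y₁` then `L(x_{[1,x₁]} ⊗ x_A) = 0`;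
(ii) `L(x_{[1,x₁]} ⊗ x_M) = ε q^z · x_{[1,y₁]} ⊗ x_{[1,y₂]}` for a sign `ε` and `z ∈ ℤ`;
(iii) if `A ≠ M` then the coefficient of `x_{[1,y₁]} ⊗ x_{[1,y₂]}` in
`L(x_{[1,x₁]} ⊗ x_A)` is zero. -/
theorem rung_on_dominant_basis (n y1 x1 y2 : ℕ) (hn : 2 ≤ n)
    (h1 : y1 < x1) (h2 : x1 < y2) (h3 : y2 ≤ n)
    (a : ℕ) (ha : a = y1 + y2 - x1)
    (M : Finset (Fin n)) (hM : M = ico n 0 y1 ∪ ico n x1 y2) :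
    (∀ A : Finset (Fin n), A.card = a → y1 < (A ∩ ico n 0 x1).card →
        rungNE n (x1 - y1) (Finsupp.single (ico n 0 x1, A) 1) = 0) ∧
    (∃ ε z : ℤ, (ε = 1 ∨ ε = -1) ∧
        rungNE n (x1 - y1) (Finsupp.single (ico n 0 x1, M) 1)
          = Finsupp.single (ico n 0 y1, ico n 0 y2)
              (LaurentPolynomial.C ε * LaurentPolynomial.T z)) ∧
    (∀ A : Finset (Fin n), A.card = a → A ≠ M →
        (rungNE n (x1 - y1) (Finsupp.single (ico n 0 x1, A) 1))
          (ico n 0 y1, ico n 0 y2) = 0) := by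
  set P := ico n 0 x1 with hP
  set T0 := ico n 0 y1 with hT0
  set D := ico n y1 x1 with hD
  set Y2 := ico n 0 y2 with hY2
  have hPcard : P.card = x1 := by rw [hP, ico_card n 0 x1 (by omega)]; omega
  have hkey : P.card - (x1 - y1) = y1 := by omega
  -- membership facts
  have hT0P : T0 ⊆ P := by
    intro j hj; rw [hT0, mem_ico] at hj; rw [hP, mem_ico]; omega
  have hPT0 : P \ T0 = D := by
    ext j; simp only [hP, hT0, hD, Finset.mem_sdiff, mem_ico]; omega
  have hDdisjM : Disjoint D M := by
    rw [Finset.disjoint_left]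
    intro j hj hj'
    rw [hM, hT0, Finset.mem_union, mem_ico, mem_ico] at hj'
    rw [hD, mem_ico] at hj
    omega
  have hDM : D ∪ M = Y2 := by
    ext j
    simp only [hM, hT0, hD, hY2, Finset.mem_union, mem_ico]
    omega
  have hY2D : Y2 \ D = M := by
    ext j
    simp only [hM, hT0, hD, hY2, Finset.mem_sdiff, mem_ico, Finset.mem_union]
    omega
  -- uniqueness of T for disjointness against M
  have huniq : ∀ T ∈ P.powersetCard (P.card - (x1 - y1)), Disjoint (P \ T) M → T = T0 := by
    intro T hT hdisj
    rw [Finset.mem_powersetCard] at hT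
    have hsub : P \ T ⊆ D := by
      intro j hj
      have hjP : j ∈ P := (Finset.mem_sdiff.mp hj).1
      have hjM : j ∉ M := Finset.disjoint_left.mp hdisj hj
      rw [hP, mem_ico] at hjP
      rw [hD, mem_ico]
      rw [hM, hT0, Finset.mem_union, mem_ico, mem_ico] at hjM
      omega
    have hcardD : D.card = x1 - y1 := by rw [hD, ico_card n y1 x1 (by omega)]
    have hcardPT : (P \ T).card = x1 - y1 := by
      rw [Finset.card_sdiff_of_subset hT.1, hPcard, hT.2]; omega
    have hPTD : P \ T = D := Finset.eq_of_subset_of_card_le hsub (by omega)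
    have : P \ (P \ T) = P \ D := by rw [hPTD]
    rwa [Finset.sdiff_sdiff_eq_self hT.1, ← hPT0, Finset.sdiff_sdiff_eq_self hT0P] at this
  refine ⟨?_, ?_, ?_⟩
  · -- part (i)
    intro A hA hcard
    rw [rungNE_single]
    rw [Finset.sum_eq_zero, smul_zero]
    intro T hT
    rw [Finset.mem_powersetCard] at hT
    rw [if_neg]
    intro hdisj
    have hsub : A ∩ P ⊆ T := by
      intro j hj
      rw [Finset.mem_inter] at hj
      by_contra hjT
      exact Finset.disjoint_left.mp hdisj (Finset.mem_sdiff.mpr ⟨hj.2, hjT⟩) hj.1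
    have := Finset.card_le_card hsub
    rw [hT.2, hkey] at this
    omega
  · -- part (ii)
    rw [rungNE_single]
    have hT0mem : T0 ∈ P.powersetCard (P.card - (x1 - y1)) := by
      rw [Finset.mem_powersetCard, hkey]
      exact ⟨hT0P, by rw [hT0, ico_card n 0 y1 (by omega)]; omega⟩
    rw [Finset.sum_eq_single_of_mem T0 hT0mem]
    · rw [if_pos (by rw [hPT0]; exact hDdisjM), hPT0, hDM]
      rw [negqpow_mul, Finsupp.smul_single, smul_eq_mul, hkey]
      refine ⟨(-1:ℤ)^(y1 * (x1-y1)) * (-1:ℤ)^(ell D T0 + ell D M),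
        (ell D M : ℤ) - (ell D T0 : ℤ), ?_, ?_⟩
      · have pm : ∀ k : ℕ, (-1:ℤ)^k = 1 ∨ (-1:ℤ)^k = -1 := by
          intro k
          rcases Nat.even_or_odd k with h | h
          · left; exact h.neg_one_pow
          · right; exact h.neg_one_pow
        rcases pm (y1 * (x1-y1)) with h | h <;>
          rcases pm (ell D T0 + ell D M) with h' | h' <;>
          rw [h, h'] <;> simp
      · rw [signpow, ← mul_assoc, ← map_mul]
    · intro T hT hne
      rw [if_neg]
      intro hdisj
      exact hne (huniq T hT hdisj)
  · -- part (iii)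
    intro A hA hAM
    rw [rungNE_single]
    rw [Finsupp.smul_apply, Finsupp.finset_sum_apply]
    rw [Finset.sum_eq_zero, smul_zero]
    intro T hT
    split_ifs with hdisj
    · rw [Finsupp.single_apply, if_neg]
      intro heq
      rw [Prod.mk.injEq] at heq
      obtain ⟨hTeq, hUeq⟩ := heq
      subst hTeq
      rw [hPT0] at hUeq hdisj
      apply hAM
      have : (D ∪ A) \ D = Y2 \ D := by rw [hUeq]
      rwa [Finset.union_sdiff_cancel_left hdisj, hY2D] at this
    · rfl
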